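/- Let n ≥ 1 and let U be a nonempty upset of a De Morgan lattice L. Then Cons(fgₙ(U)) is the almost consistent n-filter generated by U: it is an almost consistent n-filter containing U, and it is contained in every almost consistent n-filter on L that contains U. -/

import Mathlib

/-- A De Morgan lattice: a distributive lattice with an antitone involution. -/
class DeMorgan (L : Type*) extends DistribLattice L where
  dneg : L → L
  dneg_dneg : ∀ x : L, dneg (dneg x) = x
  dneg_sup : ∀ x y : L, dneg (x ⊔ y) = dneg x ⊓ dneg y

prefix:max "∼" => DeMorgan.dneg

section Defs

variable {α : Type*}

/-- An upward closed subset of a lattice. -/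
def IsUpset [Lattice α] (F : Set α) : Prop :=
  ∀ ⦃x y : α⦄, x ∈ F → x ≤ y → y ∈ F

/-- A lattice filter: an upset closed under binary meets. -/
def IsLatFilter [Lattice α] (F : Set α) : Prop :=
  IsUpset F ∧ ∀ x y : α, x ∈ F → y ∈ F → x ⊓ y ∈ F

/-- An `n`-filter: an upset such that for every nonempty finite `Y`, if the meet of
every nonempty subset of `Y` of size at most `n` lies in `F`, then so does the meet of `Y`. -/
def IsNFilter [Lattice α] (n : ℕ) (F : Set α) : Prop :=
  IsUpset F ∧ ∀ (Y : Finset α) (hY : Y.Nonempty),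
    (∀ (X : Finset α) (hX : X.Nonempty), X ⊆ Y → X.card ≤ n → X.inf' hX id ∈ F) →
    Y.inf' hY id ∈ F

/-- A prime upset: `x ⊔ y ∈ F` implies `x ∈ F` or `y ∈ F`. -/
def IsPrimeUpset [Lattice α] (F : Set α) : Prop :=
  ∀ x y : α, x ⊔ y ∈ F → x ∈ F ∨ y ∈ F

/-- A downward closed subset of a lattice. -/
def IsDownset [Lattice α] (I : Set α) : Prop :=
  ∀ ⦃x y : α⦄, x ∈ I → y ≤ x → y ∈ I

/-- A lattice ideal: a downset closed under binary joins. -/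
def IsIdeal [Lattice α] (I : Set α) : Prop :=
  IsDownset I ∧ ∀ x y : α, x ∈ I → y ∈ I → x ⊔ y ∈ I

/-- An `n`-ideal: the order dual notion of an `n`-filter. -/
def IsNIdeal [Lattice α] (n : ℕ) (I : Set α) : Prop :=
  IsDownset I ∧ ∀ (Y : Finset α) (hY : Y.Nonempty),
    (∀ (X : Finset α) (hX : X.Nonempty), X ⊆ Y → X.card ≤ n → X.sup' hX id ∈ I) →
    Y.sup' hY id ∈ I

variable {L : Type*} [DeMorgan L]

/-- Almost complete upset: `x ∈ F` implies `x ⊓ (y ⊔ ∼y) ∈ F`. -/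
def AlmostComplete (F : Set L) : Prop := ∀ x ∈ F, ∀ y : L, x ⊓ (y ⊔ ∼y) ∈ F

/-- Complete upset: almost complete and nonempty. -/
def IsCompleteUpset (F : Set L) : Prop := AlmostComplete F ∧ F.Nonempty

/-- Almost consistent upset: `(x ⊓ ∼x) ⊔ y ∈ F` implies `y ∈ F`. -/
def AlmostConsistent (F : Set L) : Prop := ∀ x y : L, (x ⊓ ∼x) ⊔ y ∈ F → y ∈ F

/-- Consistent upset: almost consistent and not total. -/
def IsConsistentUpset (F : Set L) : Prop := AlmostConsistent F ∧ F ≠ Set.univ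

/-- Classical upset: complete and consistent. -/
def IsClassicalUpset (F : Set L) : Prop := IsCompleteUpset F ∧ IsConsistentUpset F

/-- Kalman upset. -/
def IsKalmanUpset (F : Set L) : Prop :=
  ∀ x y z u : L, ((x ⊓ ∼x) ⊓ z) ⊔ u ∈ F → ((y ⊔ ∼y) ⊓ z) ⊔ u ∈ F

/-- A homomorphism of De Morgan lattices. -/
def IsDMHom {L M : Type*} [DeMorgan L] [DeMorgan M] (h : L → M) : Prop :=
  (∀ x y : L, h (x ⊓ y) = h x ⊓ h y) ∧ (∀ x y : L, h (x ⊔ y) = h x ⊔ h y) ∧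
    ∀ x : L, h (∼x) = ∼(h x)

/-- The filter generated by all elements of the form `x ⊔ ∼x`. -/
def Fcomp (L : Type*) [DeMorgan L] : Set L :=
  {a | ∃ (s : Finset L) (hs : s.Nonempty), s.inf' hs (fun x => x ⊔ ∼x) ≤ a}

/-- The `n`-filter generated by a set. -/
def nFilterGen (n : ℕ) (U : Set L) : Set L :=
  ⋂₀ {F : Set L | IsNFilter n F ∧ U ⊆ F}

/-- `Comp U`. -/
def CompCl (U : Set L) : Set L := {x | ∃ a ∈ U, ∃ f ∈ Fcomp L, a ⊓ f ≤ x}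

/-- `Cons U`. -/
def ConsCl (U : Set L) : Set L := {x | ∃ f ∈ Fcomp L, ∼f ⊔ x ∈ U}

/-- A congruence of De Morgan lattices, as a binary relation. -/
def IsCongruence (θ : L → L → Prop) : Prop :=
  Equivalence θ ∧
  (∀ a b c d : L, θ a b → θ c d → θ (a ⊓ c) (b ⊓ d)) ∧
  (∀ a b c d : L, θ a b → θ c d → θ (a ⊔ c) (b ⊔ d)) ∧
  ∀ a b : L, θ a b → θ (∼a) (∼b)

end Defs

/-- The four-element De Morgan lattice `DM₁` on `Bool × Bool`. -/
instance : DeMorgan (Bool × Bool) :=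
  { (inferInstance : DistribLattice (Bool × Bool)) with
    dneg := fun p => (!p.2, !p.1)
    dneg_dneg := by decide
    dneg_sup := by decide }

/-- Powers of `DM₁`, with componentwise operations. -/
instance {ι : Type*} : DeMorgan (ι → Bool × Bool) :=
  { (inferInstance : DistribLattice (ι → Bool × Bool)) with
    dneg := fun f i => ∼(f i)
    dneg_dneg := fun f => funext fun i => DeMorgan.dneg_dneg (f i)
    dneg_sup := fun f g => funext fun i => DeMorgan.dneg_sup (f i) (g i) }

/-!
`Cons F` contains `F` because `∼(x ⊔ ∼x) ⊔ x = x`, and it is almost consistent because a witness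
`f` for `(x ⊓ ∼x) ⊔ y` strengthens to the witness `f ⊓ (x ⊔ ∼x)` for `y`. An almost consistent
upset `G` absorbs `∼f` for every `f ∈ F_comp`, because the `f` with this property form a lattice
filter containing the generators `x ⊔ ∼x`; so `Cons F ⊆ G` whenever `F ⊆ G`. If `F` is an
`n`-filter, so is `Cons F`: the finitely many small subsets of `Y` share one witness `f`, and
translating `Y` by `∼f ⊔ ·` reduces the claim to the `n`-filter property of `F`.
-/

namespace Finset

variable {α β : Type*} [DecidableEq β]

theorem exists_subset_image_eq_card_le {s : Finset α} {t : Finset β} {f : α → β}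
    (h : t ⊆ s.image f) : ∃ u ⊆ s, u.image f = t ∧ #u ≤ #t := by
  classical
  induction t using Finset.induction_on with
  | empty => exact ⟨∅, empty_subset s, image_empty f, le_rfl⟩
  | insert b t hb ih =>
    obtain ⟨a, ha, rfl⟩ := mem_image.1 (h (mem_insert_self _ t))
    obtain ⟨u, hus, hut, hcard⟩ := ih ((subset_insert _ t).trans h)
    refine ⟨insert a u, insert_subset ha hus, by rw [image_insert, hut], ?_⟩
    rw [card_insert_of_notMem hb]
    exact (card_insert_le a u).trans (Nat.add_le_add_right hcard 1)

end Finset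

theorem IsNFilter.sup_inf'_mem {α : Type*} [DistribLattice α] {n : ℕ} {F : Set α}
    (hF : IsNFilter n F) (a : α) {Y : Finset α} (hY : Y.Nonempty)
    (h : ∀ (X : Finset α) (hX : X.Nonempty), X ⊆ Y → X.card ≤ n → a ⊔ X.inf' hX id ∈ F) :
    a ⊔ Y.inf' hY id ∈ F := by
  classical
  have translate (X : Finset α) (hX : X.Nonempty) :
      a ⊔ X.inf' hX id = (X.image (a ⊔ ·)).inf' (hX.image _) id := by
    rw [Finset.inf'_image, Finset.inf'_sup_distrib_left]
    rfl
  rw [translate]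
  refine hF.2 _ _ fun X' hX' hX'Y hcard => ?_
  obtain ⟨X, hXY, rfl, hXcard⟩ := Finset.exists_subset_image_eq_card_le hX'Y
  rw [← translate X (Finset.image_nonempty.1 hX')]
  exact h X _ hXY (hXcard.trans hcard)

namespace DeMorgan

variable {L : Type*} [DeMorgan L]

theorem dneg_anti {x y : L} (h : x ≤ y) : ∼y ≤ ∼x := by
  rw [← sup_eq_right.2 h, dneg_sup]
  exact inf_le_left

theorem dneg_inf (x y : L) : ∼(x ⊓ y) = ∼x ⊔ ∼y := by
  rw [← dneg_dneg (∼x ⊔ ∼y), dneg_sup, dneg_dneg, dneg_dneg]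

end DeMorgan

open DeMorgan

section ConsCl

variable {L : Type*} [DeMorgan L]

theorem sup_dneg_mem_fcomp (x : L) : x ⊔ ∼x ∈ Fcomp L :=
  ⟨{x}, Finset.singleton_nonempty x, by simp⟩

theorem isLatFilter_fcomp : IsLatFilter (Fcomp L) := by
  classical
  refine ⟨fun x y ⟨s, hs, hle⟩ hxy => ⟨s, hs, hle.trans hxy⟩, ?_⟩
  rintro x y ⟨s, hs, hsx⟩ ⟨t, ht, hty⟩
  refine ⟨s ∪ t, hs.mono Finset.subset_union_left, ?_⟩
  rw [Finset.inf'_union hs ht]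
  exact inf_le_inf hsx hty

theorem fcomp_subset {P : Set L} (hP : IsLatFilter P) (hgen : ∀ x, x ⊔ ∼x ∈ P) :
    Fcomp L ⊆ P := by
  rintro a ⟨s, hs, hle⟩
  exact hP.1 (Finset.inf'_induction hs _ (fun a ha b hb => hP.2 a b ha hb) fun x _ => hgen x) hle

theorem IsUpset.dneg_sup_mem_of_le {F : Set L} (hF : IsUpset F) {f g x : L} (hfg : f ≤ g)
    (h : ∼g ⊔ x ∈ F) : ∼f ⊔ x ∈ F :=
  hF h (sup_le_sup_right (dneg_anti hfg) x)

theorem AlmostConsistent.mem_of_dneg_sup_mem {G : Set L} (hGac : AlmostConsistent G)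
    (hG : IsUpset G) {f x : L} (hf : f ∈ Fcomp L) (h : ∼f ⊔ x ∈ G) : x ∈ G := by
  suffices Fcomp L ⊆ {f | ∀ x, ∼f ⊔ x ∈ G → x ∈ G} from this hf x h
  refine fcomp_subset ⟨fun f g hf hfg x hx => hf x (hG.dneg_sup_mem_of_le hfg hx), ?_⟩ ?_
  · intro f g hf hg x hx
    rw [dneg_inf, sup_assoc] at hx
    exact hg x (hf _ hx)
  · intro z x hx
    rw [dneg_sup] at hx
    exact hGac (∼z) x hx

theorem IsUpset.consCl {F : Set L} (hF : IsUpset F) : IsUpset (ConsCl F) :=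
  fun _ _ ⟨f, hf, hfx⟩ hxy => ⟨f, hf, hF hfx (sup_le_sup_left hxy _)⟩

theorem subset_consCl (F : Set L) : F ⊆ ConsCl F := by
  intro x hx
  refine ⟨x ⊔ ∼x, sup_dneg_mem_fcomp x, ?_⟩
  rwa [dneg_sup, dneg_dneg, inf_comm, sup_comm, sup_inf_self]

theorem almostConsistent_consCl (F : Set L) : AlmostConsistent (ConsCl F) := by
  rintro x y ⟨f, hf, hmem⟩
  refine ⟨f ⊓ (x ⊔ ∼x), isLatFilter_fcomp.2 _ _ hf (sup_dneg_mem_fcomp x), ?_⟩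
  rwa [dneg_inf, dneg_sup, dneg_dneg, inf_comm, sup_assoc]

theorem consCl_subset {F G : Set L} (hG : IsUpset G) (hGac : AlmostConsistent G)
    (hFG : F ⊆ G) : ConsCl F ⊆ G :=
  fun _ ⟨_, hf, hmem⟩ => hGac.mem_of_dneg_sup_mem hG hf (hFG hmem)

theorem exists_fcomp_forall_dneg_sup_mem {F : Set L} (hF : IsUpset F) {ι : Type*}
    {s : Finset ι} (hs : s.Nonempty) {x : ι → L} (h : ∀ i ∈ s, x i ∈ ConsCl F) :
    ∃ f ∈ Fcomp L, ∀ i ∈ s, ∼f ⊔ x i ∈ F := by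
  induction hs using Finset.Nonempty.cons_induction with
  | singleton i =>
    obtain ⟨f, hf, hfx⟩ := h i (Finset.mem_singleton_self i)
    exact ⟨f, hf, fun j hj => Finset.mem_singleton.1 hj ▸ hfx⟩
  | cons i s hi hs ih =>
    obtain ⟨f, hf, hfx⟩ := h i (Finset.mem_cons_self i s)
    obtain ⟨g, hg, hgx⟩ := ih fun j hj => h j (Finset.mem_cons_of_mem hj)
    refine ⟨f ⊓ g, isLatFilter_fcomp.2 f g hf hg, fun j hj => ?_⟩
    rcases Finset.mem_cons.1 hj with rfl | hj
    · exact hF.dneg_sup_mem_of_le inf_le_left hfx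
    · exact hF.dneg_sup_mem_of_le inf_le_right (hgx j hj)

theorem IsNFilter.consCl {n : ℕ} (hn : 1 ≤ n) {F : Set L} (hF : IsNFilter n F) :
    IsNFilter n (ConsCl F) := by
  classical
  refine ⟨hF.1.consCl, fun Y hY h => ?_⟩
  let S := Y.powerset.filter fun X => X.Nonempty ∧ X.card ≤ n
  have hS : S.attach.Nonempty := by
    obtain ⟨y, hy⟩ := hY
    exact Finset.attach_nonempty_iff.2 ⟨{y}, by simpa [S] using ⟨hy, hn⟩⟩
  obtain ⟨f, hf, hfS⟩ := exists_fcomp_forall_dneg_sup_mem hF.1 hS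
    (x := fun X => X.1.inf' (Finset.mem_filter.1 X.2).2.1 id) fun X _ =>
      h _ _ (Finset.mem_powerset.1 (Finset.mem_filter.1 X.2).1) (Finset.mem_filter.1 X.2).2.2
  exact ⟨f, hf, hF.sup_inf'_mem _ hY fun X hX hXY hXn =>
    hfS ⟨X, by simp [S, hXY, hX, hXn]⟩ (Finset.mem_attach _ _)⟩

theorem isNFilter_nFilterGen (n : ℕ) (U : Set L) : IsNFilter n (nFilterGen n U) :=
  ⟨fun _ _ hx hxy F hF => hF.1.1 (hx F hF) hxy,
    fun Y hY h F hF => hF.1.2 Y hY fun X hX hXY hXn => h X hX hXY hXn F hF⟩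

theorem subset_nFilterGen (n : ℕ) (U : Set L) : U ⊆ nFilterGen n U :=
  fun _ hx _ hF => hF.2 hx

theorem nFilterGen_subset {n : ℕ} {U G : Set L} (hG : IsNFilter n G) (hUG : U ⊆ G) :
    nFilterGen n U ⊆ G :=
  Set.sInter_subset_of_mem ⟨hG, hUG⟩

end ConsCl

theorem statement16_general {L : Type*} [DeMorgan L] (n : ℕ) (hn : 1 ≤ n)
    (U : Set L) :
    (IsNFilter n (ConsCl (nFilterGen n U)) ∧ AlmostConsistent (ConsCl (nFilterGen n U))) ∧
    U ⊆ ConsCl (nFilterGen n U) ∧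
    ∀ G : Set L, IsNFilter n G → AlmostConsistent G → U ⊆ G →
      ConsCl (nFilterGen n U) ⊆ G :=
  ⟨⟨(isNFilter_nFilterGen n U).consCl hn, almostConsistent_consCl _⟩,
    (subset_nFilterGen n U).trans (subset_consCl _),
    fun _ hG hGac hUG => consCl_subset hG.1 hGac (nFilterGen_subset hG hUG)⟩

/-- `Cons (fgₙ U)` is the almost consistent `n`-filter generated by `U`. -/
theorem statement16 {L : Type*} [DeMorgan L] [Nonempty L] (n : ℕ) (hn : 1 ≤ n)
    (U : Set L) (hU : IsUpset U) (hne : U.Nonempty) :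
    (IsNFilter n (ConsCl (nFilterGen n U)) ∧ AlmostConsistent (ConsCl (nFilterGen n U))) ∧
    U ⊆ ConsCl (nFilterGen n U) ∧
    ∀ G : Set L, IsNFilter n G → AlmostConsistent G → U ⊆ G →
      ConsCl (nFilterGen n U) ⊆ G :=
  statement16_general n hn U
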